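/- Let G be an undirected graph, x a vertex, and ν, k positive numbers with 2νk + ν + 1 ≤ 2m where m = |E(G)|. Construct the capacitated graph G' on vertex set {s} ∪ V ∪ {t} where each edge of G gets capacity 2ν, each vertex u is joined to t by an edge of capacity deg_G(u), and s is joined to x by an edge of capacity 2νk + ν + 1. If there exists a vertex set S ⊆ V with x ∈ S, vol(S) ≤ ν, and |E(S, V−S)| ≤ k, then the value of the maximum s-t flow in G' is at most 2νk + ν. -/

import Mathlib

open Finset

inductive AugV (V : Type) where
  | s : AugV V
  | t : AugV V
  | orig : V → AugV V
deriving DecidableEq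

instance {V : Type} [Fintype V] [DecidableEq V] : Fintype (AugV V) :=
  Fintype.ofSurjective
    (fun o : Option (Option V) =>
      match o with
      | none => AugV.s
      | some none => AugV.t
      | some (some v) => AugV.orig v)
    (by rintro (_ | _ | v)
        · exact ⟨none, rfl⟩
        · exact ⟨some none, rfl⟩
        · exact ⟨some (some v), rfl⟩)

variable {V : Type} [Fintype V] [DecidableEq V]

/-- A flow on the augmented graph with capacity function `c`,
source `s` and sink `t`. -/
structure AugFlow (c : AugV V → AugV V → ℝ) where
  f : AugV V → AugV V → ℝ
  skew : ∀ u v, f u v = - f v u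
  le_cap : ∀ u v, f u v ≤ c u v
  conserve : ∀ v : AugV V, v ≠ AugV.s → v ≠ AugV.t → ∑ u : AugV V, f u v = 0

/-- The value of a flow: total flow leaving the source `s`. -/
def AugFlow.value {c : AugV V → AugV V → ℝ} (fl : AugFlow c) : ℝ :=
  ∑ v : AugV V, fl.f AugV.s v

/-- The capacities of the augmented graph `G'`: each edge of `G` gets capacity
`2ν`, each vertex `u` is joined to `t` with capacity `deg_G(u)`, and `s` is
joined to `x` with capacity `2νk + ν + 1`. -/
def augCap (G : SimpleGraph V) [DecidableRel G.Adj] (x : V) (ν k : ℝ) :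
    AugV V → AugV V → ℝ
  | AugV.orig u, AugV.orig v => if G.Adj u v then 2 * ν else 0
  | AugV.orig u, AugV.t => (G.degree u : ℝ)
  | AugV.s, AugV.orig v => if v = x then 2 * ν * k + ν + 1 else 0
  | _, _ => 0

namespace AugFlow

variable {c : AugV V → AugV V → ℝ} (fl : AugFlow c)

theorem sum_out_eq_zero {v : AugV V} (hs : v ≠ AugV.s) (ht : v ≠ AugV.t) :
    ∑ w, fl.f v w = 0 := by
  simp only [fl.skew v, Finset.sum_neg_distrib, fl.conserve v hs ht, neg_zero]

theorem sum_sum_self_eq_zero (A : Finset (AugV V)) : ∑ u ∈ A, ∑ v ∈ A, fl.f u v = 0 := by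
  have h : ∑ u ∈ A, ∑ v ∈ A, fl.f u v = -∑ u ∈ A, ∑ v ∈ A, fl.f u v :=
    calc ∑ u ∈ A, ∑ v ∈ A, fl.f u v
        = ∑ u ∈ A, ∑ v ∈ A, fl.f v u := Finset.sum_comm
      _ = ∑ u ∈ A, ∑ v ∈ A, -fl.f u v :=
          Finset.sum_congr rfl fun u _ => Finset.sum_congr rfl fun v _ => fl.skew v u
      _ = -∑ u ∈ A, ∑ v ∈ A, fl.f u v := by simp only [Finset.sum_neg_distrib]
  linarith

/-- Flow inside `A` cancels by skew symmetry, and every vertex of `A` other than `s` conserves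
flow. -/
theorem value_eq_sum_cut {A : Finset (AugV V)} (hs : AugV.s ∈ A) (ht : AugV.t ∉ A) :
    fl.value = ∑ u ∈ A, ∑ v ∈ Aᶜ, fl.f u v := by
  have hout : fl.value = ∑ u ∈ A, ∑ v, fl.f u v := by
    rw [value, ← Finset.add_sum_erase A _ hs, left_eq_add]
    refine Finset.sum_eq_zero fun u hu => fl.sum_out_eq_zero (Finset.ne_of_mem_erase hu) ?_
    exact ne_of_mem_of_not_mem (Finset.mem_of_mem_erase hu) ht
  simp only [hout, ← Finset.sum_add_sum_compl A, Finset.sum_add_distrib, fl.sum_sum_self_eq_zero,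
    zero_add]

theorem value_le_sum_cut_cap {A : Finset (AugV V)} (hs : AugV.s ∈ A) (ht : AugV.t ∉ A) :
    fl.value ≤ ∑ u ∈ A, ∑ v ∈ Aᶜ, c u v := by
  rw [fl.value_eq_sum_cut hs ht]
  gcongr with u _ v _
  exact fl.le_cap u v

end AugFlow

theorem AugV.orig_injective {W : Type} : Function.Injective (AugV.orig : W → AugV W) :=
  fun _ _ h => AugV.orig.inj h

theorem compl_insert_s_image_orig (S : Finset V) :
    (insert AugV.s (S.image AugV.orig))ᶜ = insert AugV.t (Sᶜ.image AugV.orig) := by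
  ext (_ | _ | a) <;> simp

theorem sum_cut_augCap (G : SimpleGraph V) [DecidableRel G.Adj] {x : V} (ν k : ℝ) {S : Finset V}
    (hx : x ∈ S) :
    ∑ u ∈ insert AugV.s (S.image AugV.orig), ∑ v ∈ (insert AugV.s (S.image AugV.orig))ᶜ,
        augCap G x ν k u v =
      ∑ u ∈ S, (G.degree u : ℝ) + ((S ×ˢ Sᶜ).filter fun p => G.Adj p.1 p.2).card * (2 * ν) := by
  have hsource : ∀ v ∈ insert AugV.t (Sᶜ.image AugV.orig), augCap G x ν k AugV.s v = 0 := by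
    rintro v hv
    obtain rfl | ⟨b, hb, rfl⟩ : v = AugV.t ∨ ∃ b ∈ Sᶜ, AugV.orig b = v := by simpa using hv
    · simp [augCap]
    · have hbx : b ≠ x := by rintro rfl; exact Finset.mem_compl.mp hb hx
      simp [augCap, hbx]
  rw [compl_insert_s_image_orig, Finset.sum_insert (by simp), Finset.sum_eq_zero hsource, zero_add,
    Finset.sum_image AugV.orig_injective.injOn]
  simp only [Finset.sum_insert (by simp : AugV.t ∉ Sᶜ.image AugV.orig),
    Finset.sum_image AugV.orig_injective.injOn, augCap, Finset.sum_add_distrib]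
  rw [← Finset.sum_product', ← Finset.sum_filter, Finset.sum_const, nsmul_eq_mul]

theorem stmt1_general (G : SimpleGraph V) [DecidableRel G.Adj] (x : V) (ν k : ℝ)
    (hν : 0 < ν)
    (S : Finset V) (hx : x ∈ S)
    (hvol : (∑ u ∈ S, (G.degree u : ℝ)) ≤ ν)
    (hcross : (((S ×ˢ Sᶜ).filter fun p => G.Adj p.1 p.2).card : ℝ) ≤ k)
    (F : ℝ)
    (hF : IsGreatest {r : ℝ | ∃ fl : AugFlow (augCap G x ν k), fl.value = r} F) :
    F ≤ 2 * ν * k + ν := by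
  obtain ⟨fl, rfl⟩ := hF.1
  have hcut := fl.value_le_sum_cut_cap (A := insert AugV.s (S.image AugV.orig)) (by simp)
    (by simp)
  rw [sum_cut_augCap G ν k hx] at hcut
  nlinarith

/-- Let `G` be an undirected graph with `m` edges, `x` a vertex, and
`ν, k > 0` with `2νk + ν + 1 ≤ 2m`. If there is a set `S ∋ x` with
`vol(S) ≤ ν` and `|E(S, V−S)| ≤ k`, then the maximum `s`-`t` flow value `F`
in the augmented graph `G'` satisfies `F ≤ 2νk + ν`. -/
theorem stmt1 (G : SimpleGraph V) [DecidableRel G.Adj] (x : V) (ν k : ℝ)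
    (hν : 0 < ν) (hk : 0 < k)
    (hm : 2 * ν * k + ν + 1 ≤ 2 * (G.edgeFinset.card : ℝ))
    (S : Finset V) (hx : x ∈ S)
    (hvol : (∑ u ∈ S, (G.degree u : ℝ)) ≤ ν)
    (hcross : (((S ×ˢ Sᶜ).filter fun p => G.Adj p.1 p.2).card : ℝ) ≤ k)
    (F : ℝ)
    (hF : IsGreatest {r : ℝ | ∃ fl : AugFlow (augCap G x ν k), fl.value = r} F) :
    F ≤ 2 * ν * k + ν :=
  stmt1_general G x ν k hν S hx hvol hcross F hF
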